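/- A connected graph whose edges are coloured with two colours admits a closed walk traversing every edge exactly once in which consecutive edges always have distinct colours (an alternating Eulerian cycle) if and only if at every vertex the number of incident edges of each colour is equal. -/

import Mathlib

open Classical

/-- The simple graph underlying a multiset of edges. -/
def underGraph {V : Type*} (M : Multiset (Sym2 V)) : SimpleGraph V where
  Adj x y := x ≠ y ∧ s(x, y) ∈ M
  symm := by
    constructor
    intro x y h
    exact ⟨h.1.symm, by rw [Sym2.eq_swap]; exact h.2⟩
  loopless := ⟨fun x h => h.1 rfl⟩

/-- The number of edge-endpoints of `M` at `v`, loops counting twice. -/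
noncomputable def degAt {V : Type*} (M : Multiset (Sym2 V)) (v : V) : ℕ :=
  (M.map fun e => if e = s(v, v) then 2 else if v ∈ e then 1 else 0).sum

/-- `HasAltEulerianCycle B R`: there is a closed walk traversing every edge of the
bicoloured multigraph with black edges `B` and red edges `R` exactly once, such that
consecutive edges (cyclically) always have distinct colours. -/
def HasAltEulerianCycle {V : Type*} (B R : Multiset (Sym2 V)) : Prop :=
  ∃ (vs : List V) (cs : List Bool), vs.length = cs.length ∧
    (∀ p ∈ cs.zip (cs.rotate 1), p.1 ≠ p.2) ∧
    ↑((((vs.zip (vs.rotate 1)).zip cs).filter (fun p => p.2 = true)).map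
        fun p => s(p.1.1, p.1.2)) = B ∧
    ↑((((vs.zip (vs.rotate 1)).zip cs).filter (fun p => p.2 = false)).map
        fun p => s(p.1.1, p.1.2)) = R

namespace AltEuler

variable {V : Type*}

/-- End vertex of a walk starting at `a` with steps `s`. -/
def endV (a : V) : List (Bool × V) → V
  | [] => a
  | (_, x) :: s => endV x s

/-- Multiset of edges of colour `b` of a walk. -/
def tEdges (b : Bool) (a : V) : List (Bool × V) → Multiset (Sym2 V)
  | [] => 0
  | (c, x) :: s => (if c = b then {s(a, x)} else 0) + tEdges b x s

def firstC (s : List (Bool × V)) : Bool := (s.map Prod.fst).headD false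
def lastC (s : List (Bool × V)) : Bool := (s.map Prod.fst).getLastD false

/-- A closed, cyclically alternating walk. -/
def Cyc (a : V) (s : List (Bool × V)) : Prop :=
  s ≠ [] ∧ endV a s = a ∧ List.Chain' (· ≠ ·) (s.map Prod.fst) ∧ lastC s ≠ firstC s

@[simp] lemma endV_nil (a : V) : endV a ([] : List (Bool × V)) = a := rfl
@[simp] lemma endV_cons (a : V) (c : Bool) (x : V) (s : List (Bool × V)) :
    endV a ((c, x) :: s) = endV x s := rfl

lemma endV_append (a : V) (s t : List (Bool × V)) :
    endV a (s ++ t) = endV (endV a s) t := by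
  induction s generalizing a with
  | nil => rfl
  | cons p s ih => cases p; simp [ih]

@[simp] lemma tEdges_nil (b : Bool) (a : V) : tEdges b a [] = 0 := rfl
@[simp] lemma tEdges_cons (b c : Bool) (a x : V) (s : List (Bool × V)) :
    tEdges b a ((c, x) :: s) = (if c = b then {s(a, x)} else 0) + tEdges b x s := rfl

lemma tEdges_append (b : Bool) (a : V) (s t : List (Bool × V)) :
    tEdges b a (s ++ t) = tEdges b a s + tEdges b (endV a s) t := by
  induction s generalizing a with
  | nil => simp
  | cons p s ih => cases p; simp [ih, add_assoc]

@[simp] lemma degAt_zero (v : V) : degAt (0 : Multiset (Sym2 V)) v = 0 := rfl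

lemma degAt_add (M N : Multiset (Sym2 V)) (v : V) :
    degAt (M + N) v = degAt M v + degAt N v := by
  simp [degAt]

lemma degAt_single (a x v : V) :
    degAt ({s(a, x)} : Multiset (Sym2 V)) v
      = (if v = a then 1 else 0) + (if v = x then 1 else 0) := by
  simp only [degAt, Multiset.map_singleton, Multiset.sum_singleton]
  by_cases ha : v = a <;> by_cases hx : v = x <;>
    subst_vars <;>
    simp_all [Sym2.eq_iff, Sym2.mem_iff, eq_comm]

lemma degAt_mono {M N : Multiset (Sym2 V)} (h : M ≤ N) (v : V) :
    degAt M v ≤ degAt N v := by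
  obtain ⟨K, rfl⟩ := Multiset.le_iff_exists_add.mp h
  simp [degAt_add]

lemma degAt_pos {M : Multiset (Sym2 V)} {v : V} (h : 0 < degAt M v) :
    ∃ e ∈ M, v ∈ e := by
  by_contra hc
  push_neg at hc
  have : degAt M v = 0 := by
    simp only [degAt]
    rw [Multiset.sum_eq_zero]
    intro n hn
    simp only [Multiset.mem_map] at hn
    obtain ⟨e, he, rfl⟩ := hn
    have h1 : ¬ v ∈ e := hc e he
    have h2 : e ≠ s(v, v) := by rintro rfl; exact h1 (by simp)
    simp [h1, h2]
  omega

lemma degAt_pos_of_mem {M : Multiset (Sym2 V)} {v : V} {e : Sym2 V}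
    (he : e ∈ M) (hv : v ∈ e) : 0 < degAt M v := by
  obtain ⟨K, rfl⟩ := Multiset.exists_cons_of_mem he
  have h1 : 0 < degAt ({e} : Multiset (Sym2 V)) v := by
    simp only [degAt, Multiset.map_singleton, Multiset.sum_singleton]
    by_cases h : e = s(v, v) <;> simp [h, hv]
  have h2 : ({e} : Multiset (Sym2 V)) ≤ e ::ₘ K := by
    simp [Multiset.singleton_le]
  exact lt_of_lt_of_le h1 (degAt_mono h2 v)

@[simp] lemma firstC_cons (c : Bool) (x : V) (s : List (Bool × V)) :
    firstC ((c, x) :: s) = c := rfl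

lemma lastC_cons (c : Bool) (x : V) {s : List (Bool × V)} (h : s ≠ []) :
    lastC ((c, x) :: s) = lastC s := by
  obtain ⟨⟨d, y⟩, t, rfl⟩ := List.exists_cons_of_ne_nil h
  simp [lastC, List.getLastD_cons]

set_option maxRecDepth 20000 in
lemma tKey (b : Bool) : ∀ (s : List (Bool × V)), s ≠ [] →
    List.Chain' (· ≠ ·) (s.map Prod.fst) → ∀ (a w : V),
    degAt (tEdges b a s) w + (if w = a ∧ firstC s = !b then 1 else 0)
      + (if w = endV a s ∧ lastC s = !b then 1 else 0)
    = degAt (tEdges (!b) a s) w + (if w = a ∧ firstC s = b then 1 else 0)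
      + (if w = endV a s ∧ lastC s = b then 1 else 0) := by
  intro s
  induction s with
  | nil => intro h; exact absurd rfl h
  | cons p t ih =>
    obtain ⟨c, x⟩ := p
    rcases eq_or_ne t [] with rfl | ht
    · intro _ _ a w
      simp only [tEdges_cons, tEdges_nil, endV_cons, endV_nil, firstC_cons, add_zero,
        degAt_add, degAt_zero]
      have : lastC [(c, x)] = c := rfl
      rw [this]
      cases b <;> cases c <;>
        · by_cases h1 : w = a <;> by_cases h2 : w = x <;>
            simp [h1, h2, degAt_single] <;> omega
    · intro _ hch a w
      obtain ⟨⟨d, y⟩, t', rfl⟩ := List.exists_cons_of_ne_nil ht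
      have hcd : (¬ c = d) ∧ List.Chain' (fun x1 x2 => ¬ x1 = x2) (d :: List.map Prod.fst t') := by
        simpa [List.Chain'] using hch
      have hd : d = !c := by revert hcd; cases c <;> cases d <;> simp
      have IH := ih ht (by simpa using hcd.2) x w
      rw [lastC_cons c x ht] at *
      simp only [tEdges_cons, endV_cons, firstC_cons, degAt_add] at IH ⊢
      cases hL : lastC ((d, y) :: t') <;> rw [hL] at IH <;> subst hd <;>
      cases b <;> cases c <;>
        · simp only [Bool.not_true, Bool.not_false, reduceIte, degAt_single, degAt_add,
            degAt_zero, and_true, and_false, if_true, if_false,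
            reduceCtorEq, ite_self, add_zero, zero_add] at IH ⊢
          split_ifs at IH ⊢ <;> omega

lemma cyc_balanced {a : V} {s : List (Bool × V)} (h : Cyc a s) (w : V) :
    degAt (tEdges true a s) w = degAt (tEdges false a s) w := by
  obtain ⟨hne, hend, hch, hlf⟩ := h
  have key := tKey true s hne hch a w
  rw [hend] at key
  by_cases hw : w = a
  · subst hw
    cases hf : firstC s <;> cases hl : lastC s <;> rw [hf, hl] at key hlf <;>
      simp_all
  · simp only [hw, false_and, if_false, add_zero, Bool.not_true] at key
    omega

lemma open_deficiency {a : V} {s : List (Bool × V)} (hne : s ≠ [])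
    (hch : List.Chain' (· ≠ ·) (s.map Prod.fst))
    (hnc : ¬ (endV a s = a ∧ lastC s ≠ firstC s)) :
    degAt (tEdges (!lastC s) a s) (endV a s) < degAt (tEdges (lastC s) a s) (endV a s) := by
  have key := tKey (!(lastC s)) s hne hch a (endV a s)
  rw [Bool.not_not] at key
  have h1 : (if endV a s = endV a s ∧ lastC s = lastC s then 1 else 0) = 1 := by simp
  have h2 : (if endV a s = endV a s ∧ lastC s = !lastC s then 1 else 0) = 0 := by simp
  rw [h1, h2] at key
  have h3 : (if endV a s = a ∧ firstC s = !lastC s then 1 else 0) = 0 := by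
    by_cases he : endV a s = a
    · have : ¬ lastC s ≠ firstC s := fun hne' => hnc ⟨he, hne'⟩
      have : firstC s = lastC s := by
        cases hf : firstC s <;> cases hl : lastC s <;> simp_all
      rw [this]
      simp only [ite_eq_right_iff, and_imp]
      intro _ h'
      exact absurd h' (by cases lastC s <;> simp)
    · simp [he]
  rw [h3] at key
  omega

lemma card_tEdges (a : V) (s : List (Bool × V)) :
    Multiset.card (tEdges true a s) + Multiset.card (tEdges false a s) = s.length := by
  induction s generalizing a with
  | nil => simp
  | cons p t ih =>
    obtain ⟨c, x⟩ := p
    have h := ih x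
    cases c <;> simp [Multiset.card_add] <;> omega

/-! ### small list helpers -/

lemma headD_append {α : Type*} {l₁ : List α} (l₂ : List α) (d : α) (h : l₁ ≠ []) :
    (l₁ ++ l₂).headD d = l₁.headD d := by
  cases l₁ with
  | nil => exact absurd rfl h
  | cons a t => rfl

lemma getLastD_of_ne_nil {α : Type*} {l : List α} (h : l ≠ []) (d d' : α) :
    l.getLastD d = l.getLastD d' := by
  rw [List.getLastD_eq_getLast?, List.getLastD_eq_getLast?, List.getLast?_eq_getLast h]
  rfl

lemma getLastD_append {α : Type*} (l₁ : List α) {l₂ : List α} (d : α) (h : l₂ ≠ []) :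
    (l₁ ++ l₂).getLastD d = l₂.getLastD d := by
  induction l₁ with
  | nil => rfl
  | cons a t ih =>
    rw [List.cons_append, List.getLastD_cons]
    rw [show (t ++ l₂).getLastD a = (t ++ l₂).getLastD d from
      getLastD_of_ne_nil (by simp [h]) a d]
    exact ih

lemma getLast?_eq_getLastD {α : Type*} {l : List α} (h : l ≠ []) (d : α) :
    l.getLast? = some (l.getLastD d) := by
  obtain ⟨y, hy⟩ := Option.isSome_iff_exists.mp (List.getLast?_isSome.mpr h)
  rw [hy, List.getLastD_eq_getLast?, hy]
  rfl

lemma head?_eq_headD {α : Type*} {l : List α} (h : l ≠ []) (d : α) :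
    l.head? = some (l.headD d) := by
  cases l with
  | nil => exact absurd rfl h
  | cons a t => rfl

lemma headD_eq_getElem {α : Type*} {l : List α} (h : 0 < l.length) (d : α) :
    l.headD d = l[0] := by
  cases l with
  | nil => simp at h
  | cons a t => rfl

lemma getLastD_eq_getElem {α : Type*} {l : List α} (h : l ≠ []) (d : α)
    (hl : l.length - 1 < l.length) :
    l.getLastD d = l[l.length - 1] := by
  rw [List.getLastD_eq_getLast?, List.getLast?_eq_getLast h, Option.getD_some,
    List.getLast_eq_getElem]

lemma zip_append_left {α β : Type*} : ∀ (l l' : List α) (m : List β),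
    m.length ≤ l.length → (l ++ l').zip m = l.zip m := by
  intro l
  induction l with
  | nil =>
    intro l' m hm
    simp only [List.length_nil, Nat.le_zero] at hm
    simp [List.length_eq_zero_iff.mp hm]
  | cons a t ih =>
    intro l' m hm
    cases m with
    | nil => simp
    | cons b m' => simpa using ih l' m' (by simpa using hm)

lemma zip_map_fst_snd' {α β : Type*} (l : List (α × β)) :
    (l.map Prod.fst).zip (l.map Prod.snd) = l := by
  induction l with
  | nil => rfl
  | cons p t ih => simp [ih]

/-! ### trail extension -/

lemma firstC_append_left {s : List (Bool × V)} (t : List (Bool × V)) (h : s ≠ []) :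
    firstC (s ++ t) = firstC s := by
  unfold firstC
  rw [List.map_append, headD_append _ _ (by simpa using h)]

lemma lastC_concat (s : List (Bool × V)) (c : Bool) (x : V) :
    lastC (s ++ [(c, x)]) = c := by
  unfold lastC
  rw [List.map_append, getLastD_append _ _ (by simp)]
  rfl

lemma sub_mem_add_le {α : Type*} [DecidableEq α] {U M : Multiset α} {e : α}
    (hUM : U ≤ M) (he : e ∈ M - U) : U + {e} ≤ M := by
  rw [Multiset.le_iff_count]
  intro f
  rw [Multiset.count_add]
  by_cases hf : f = e
  · subst hf
    have h1 : 0 < Multiset.count f (M - U) := Multiset.count_pos.mpr he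
    rw [Multiset.count_sub] at h1
    have h2 : Multiset.count f U ≤ Multiset.count f M := Multiset.le_iff_count.mp hUM f
    rw [Multiset.count_singleton_self]
    omega
  · rw [Multiset.count_singleton, if_neg hf, add_zero]
    exact Multiset.le_iff_count.mp hUM f

lemma exists_ext (MB MR : Multiset (Sym2 V)) (hbal : ∀ w, degAt MB w = degAt MR w)
    {a : V} {s : List (Bool × V)} (hne : s ≠ [])
    (hch : List.Chain' (· ≠ ·) (s.map Prod.fst))
    (hB : tEdges true a s ≤ MB) (hR : tEdges false a s ≤ MR)
    (hnc : ¬ (endV a s = a ∧ lastC s ≠ firstC s)) :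
    ∃ x : V, tEdges true a (s ++ [(!lastC s, x)]) ≤ MB ∧
      tEdges false a (s ++ [(!lastC s, x)]) ≤ MR ∧
      s.length < Multiset.card (MB + MR) := by
  classical
  set c := lastC s with hc
  set w := endV a s with hw
  set M : Multiset (Sym2 V) := (if c then MR else MB) with hM
  set U : Multiset (Sym2 V) := tEdges (!c) a s with hU
  have hUM : U ≤ M := by
    cases hcv : c <;> simp [hM, hU, hcv, hB, hR]
  have h2 : degAt (tEdges c a s) w ≤ degAt M w := by
    cases hcv : c
    · simpa [hM, hcv] using le_trans (degAt_mono hR w) (le_of_eq (hbal w).symm)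
    · simpa [hM, hcv] using le_trans (degAt_mono hB w) (le_of_eq (hbal w))
  have hdef : degAt U w < degAt M w := by
    have h1 := open_deficiency hne hch hnc
    rw [← hc, ← hw] at h1
    exact lt_of_lt_of_le h1 h2
  have hrem : 0 < degAt (M - U) w := by
    have heq : U + (M - U) = M := add_tsub_cancel_of_le hUM
    have hadd := degAt_add U (M - U) w
    rw [heq] at hadd
    omega
  obtain ⟨e, he, hwe⟩ := degAt_pos hrem
  obtain ⟨x, rfl⟩ := Sym2.mem_iff_exists.mp hwe
  have hle : U + {s(w, x)} ≤ M := sub_mem_add_le hUM he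
  have hnew : ∀ b, tEdges b a (s ++ [(!c, x)])
      = tEdges b a s + (if (!c) = b then {s(w, x)} else 0) := by
    intro b
    rw [tEdges_append]
    simp [hw]
  have hcard : s.length < Multiset.card (MB + MR) := by
    have hcardU : Multiset.card U + 1 ≤ Multiset.card M := by
      have := Multiset.card_le_card hle
      simpa [Multiset.card_add] using this
    have hcardC : Multiset.card (tEdges c a s) ≤ Multiset.card (if c then MB else MR) := by
      cases hcv : c <;> simp [hcv] <;> exact Multiset.card_le_card (by assumption)
    have hlen := card_tEdges a s
    have hMM : Multiset.card M + Multiset.card (if c then MB else MR)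
        = Multiset.card (MB + MR) := by
      cases hcv : c <;> simp [hM, hcv, Multiset.card_add] <;> omega
    have hsplit : Multiset.card U + Multiset.card (tEdges c a s) = s.length := by
      cases hcv : c <;> simp only [hU, hcv, Bool.not_true, Bool.not_false] <;> omega
    omega
  refine ⟨x, ?_, ?_, hcard⟩
  · rw [hnew true]
    cases hcv : c
    · rw [hcv] at hU hM
      simp only [Bool.not_false, if_pos rfl]
      simpa [hU, hM] using hle
    · rw [if_neg (by simp), add_zero]
      exact hB
  · rw [hnew false]
    cases hcv : c
    · rw [if_neg (by simp), add_zero]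
      exact hR
    · rw [hcv] at hU hM
      simp only [Bool.not_true, if_pos rfl]
      simpa [hU, hM] using hle

lemma chain'_concat_of {s : List (Bool × V)} (hne : s ≠ [])
    (hch : List.Chain' (· ≠ ·) (s.map Prod.fst)) {c : Bool} (hc : lastC s ≠ c) (x : V) :
    List.Chain' (· ≠ ·) ((s ++ [(c, x)]).map Prod.fst) := by
  rw [List.map_append]
  unfold List.Chain'; rw [List.isChain_append]
  refine ⟨hch, by simp, ?_⟩
  intro y hy z hz
  rw [getLast?_eq_getLastD (by simpa using hne) false] at hy
  simp only [Option.mem_def, Option.some.injEq] at hy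
  simp only [List.map_cons, List.map_nil, List.head?_cons, Option.mem_def,
    Option.some.injEq] at hz
  subst hy; subst hz
  exact hc

lemma extend (MB MR : Multiset (Sym2 V)) (hbal : ∀ w, degAt MB w = degAt MR w) :
    ∀ (k : ℕ) (a : V) (s : List (Bool × V)), s ≠ [] →
    List.Chain' (· ≠ ·) (s.map Prod.fst) →
    tEdges true a s ≤ MB → tEdges false a s ≤ MR →
    Multiset.card (MB + MR) ≤ s.length + k →
    ∃ t, Cyc a t ∧ tEdges true a t ≤ MB ∧ tEdges false a t ≤ MR := by
  intro k
  induction k with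
  | zero =>
    intro a s hne hch hB hR hk
    by_cases hnc : endV a s = a ∧ lastC s ≠ firstC s
    · exact ⟨s, ⟨hne, hnc.1, hch, hnc.2⟩, hB, hR⟩
    · obtain ⟨x, _, _, hcard⟩ := exists_ext MB MR hbal hne hch hB hR hnc
      omega
  | succ k ih =>
    intro a s hne hch hB hR hk
    by_cases hnc : endV a s = a ∧ lastC s ≠ firstC s
    · exact ⟨s, ⟨hne, hnc.1, hch, hnc.2⟩, hB, hR⟩
    · obtain ⟨x, hB', hR', hcard⟩ := exists_ext MB MR hbal hne hch hB hR hnc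
      refine ih a (s ++ [(!lastC s, x)]) (by simp) ?_ hB' hR' ?_
      · exact chain'_concat_of hne hch (by cases lastC s <;> simp) x
      · rw [List.length_append]
        simp only [List.length_cons, List.length_nil]
        omega

lemma extract (MB MR : Multiset (Sym2 V)) (hbal : ∀ w, degAt MB w = degAt MR w) (v : V)
    (hpos : 0 < degAt (MB + MR) v) :
    ∃ t, Cyc v t ∧ tEdges true v t ≤ MB ∧ tEdges false v t ≤ MR := by
  obtain ⟨e, he, hv⟩ := degAt_pos hpos
  obtain ⟨x, rfl⟩ := Sym2.mem_iff_exists.mp hv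
  rcases Multiset.mem_add.mp he with hB | hR
  · refine extend MB MR hbal (Multiset.card (MB + MR)) v [(true, x)] (by simp)
      (by simp [List.Chain']) ?_ (by simp) (by simp)
    simpa using Multiset.singleton_le.mpr hB
  · refine extend MB MR hbal (Multiset.card (MB + MR)) v [(false, x)] (by simp)
      (by simp [List.Chain']) (by simp) ?_ (by simp)
    simpa using Multiset.singleton_le.mpr hR

lemma endV_eq_getLastD (a : V) (s : List (Bool × V)) :
    endV a s = (s.map Prod.snd).getLastD a := by
  induction s generalizing a with
  | nil => rfl
  | cons p t ih =>
    obtain ⟨c, x⟩ := p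
    rw [endV_cons, ih, List.map_cons, List.getLastD_cons]

lemma mem_vertices_of_tEdges {b : Bool} {e : Sym2 V} :
    ∀ {a : V} {s : List (Bool × V)}, e ∈ tEdges b a s → ∀ z ∈ e, z ∈ a :: s.map Prod.snd := by
  intro a s
  induction s generalizing a with
  | nil => simp
  | cons p t ih =>
    obtain ⟨c, x⟩ := p
    intro he z hz
    rw [tEdges_cons] at he
    rcases Multiset.mem_add.mp he with h1 | h2
    · by_cases hcb : c = b
      · rw [if_pos hcb] at h1
        rw [Multiset.mem_singleton] at h1
        subst h1
        rcases Sym2.mem_iff.mp hz with rfl | rfl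
        · exact List.mem_cons_self
        · simp
      · rw [if_neg hcb] at h1
        simp at h1
    · have := ih h2 z hz
      simp only [List.map_cons]
      rcases List.mem_cons.mp this with rfl | hmem
      · simp
      · simp only [List.mem_cons] at hmem ⊢
        tauto

/-! ### rotation -/

lemma chain'_rot {l₁ l₂ : List Bool} (h1 : l₁ ≠ []) (h2 : l₂ ≠ [])
    (hch : List.Chain' (· ≠ ·) (l₁ ++ l₂))
    (hcyc : (l₁ ++ l₂).getLastD false ≠ (l₁ ++ l₂).headD false) :
    List.Chain' (· ≠ ·) (l₂ ++ l₁) ∧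
      (l₂ ++ l₁).getLastD false ≠ (l₂ ++ l₁).headD false := by
  unfold List.Chain' at hch ⊢; rw [List.isChain_append] at hch
  obtain ⟨hc1, hc2, hjun⟩ := hch
  rw [getLastD_append _ _ h2, headD_append _ _ h1] at hcyc
  constructor
  · rw [List.isChain_append]
    refine ⟨hc2, hc1, ?_⟩
    intro x hx y hy
    rw [getLast?_eq_getLastD h2 false] at hx
    rw [head?_eq_headD h1 false] at hy
    simp only [Option.mem_def, Option.some.injEq] at hx hy
    subst hx; subst hy
    exact hcyc
  · rw [getLastD_append _ _ h1, headD_append _ _ h2]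
    exact hjun _ (getLast?_eq_getLastD h1 false) _ (head?_eq_headD h2 false)

lemma rotate_cyc {a : V} {s : List (Bool × V)} (h : Cyc a s) {u : V}
    (hu : u ∈ a :: s.map Prod.snd) :
    ∃ s', Cyc u s' ∧ ∀ b, tEdges b u s' = tEdges b a s := by
  obtain ⟨hne, hend, hch, hlf⟩ := h
  by_cases hua : u = a
  · subst hua
    exact ⟨s, ⟨hne, hend, hch, hlf⟩, fun b => rfl⟩
  have hu' : u ∈ s.map Prod.snd := by
    rcases List.mem_cons.mp hu with h' | h'
    · exact absurd h' hua
    · exact h'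
  obtain ⟨k, hk, hke⟩ := List.mem_iff_getElem.mp hu'
  rw [List.length_map] at hk
  have hmsne : s.map Prod.snd ≠ [] := by simpa using hne
  have hk1 : k + 1 < s.length ∨ k + 1 = s.length := by omega
  have hk1' : k + 1 < s.length := by
    rcases hk1 with h' | h'
    · exact h'
    · exfalso
      apply hua
      obtain rfl : k = (s.map Prod.snd).length - 1 := by
        rw [List.length_map]; omega
      have h1 : endV a s = (s.map Prod.snd).getLastD a := endV_eq_getLastD a s
      have h2 : (s.map Prod.snd).getLastD a
          = (s.map Prod.snd)[(s.map Prod.snd).length - 1] :=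
        getLastD_eq_getElem hmsne a (by rw [List.length_map]; omega)
      rw [← hke, ← h2, ← h1]
      exact hend
  set t1 := s.take (k + 1) with ht1
  set t2 := s.drop (k + 1) with ht2
  have hsplit : t1 ++ t2 = s := List.take_append_drop _ _
  have ht1ne : t1 ≠ [] := by
    apply List.ne_nil_of_length_pos
    rw [ht1, List.length_take]
    omega
  have ht2ne : t2 ≠ [] := by
    apply List.ne_nil_of_length_pos
    rw [ht2, List.length_drop]
    omega
  have hendt1 : endV a t1 = u := by
    rw [endV_eq_getLastD]
    have hmt1 : t1.map Prod.snd = (s.map Prod.snd).take (k + 1) := by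
      rw [ht1, List.map_take]
    rw [hmt1]
    have hlen : ((s.map Prod.snd).take (k + 1)).length = k + 1 := by
      rw [List.length_take, List.length_map]
      omega
    rw [getLastD_eq_getElem (by apply List.ne_nil_of_length_pos; omega) a (by omega)]
    simp only [hlen, Nat.add_sub_cancel]
    rw [List.getElem_take]
    exact hke
  have hendt2 : endV u t2 = a := by
    have : endV a s = endV (endV a t1) t2 := by rw [← hsplit, endV_append]
    rw [hendt1] at this
    rw [← this, hend]
  refine ⟨t2 ++ t1, ⟨by simp [ht2ne], ?_, ?_, ?_⟩, ?_⟩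
  · rw [endV_append, hendt2, hendt1]
  · have := chain'_rot (l₁ := t1.map Prod.fst) (l₂ := t2.map Prod.fst)
      (by simpa using ht1ne) (by simpa using ht2ne)
      (by rw [← List.map_append, hsplit]; exact hch)
      (by rw [← List.map_append, hsplit]; exact hlf)
    rw [← List.map_append] at this
    exact this.1
  · have := chain'_rot (l₁ := t1.map Prod.fst) (l₂ := t2.map Prod.fst)
      (by simpa using ht1ne) (by simpa using ht2ne)
      (by rw [← List.map_append, hsplit]; exact hch)
      (by rw [← List.map_append, hsplit]; exact hlf)
    rw [← List.map_append] at this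
    exact this.2
  · intro b
    have h1 : tEdges b a s = tEdges b a t1 + tEdges b u t2 := by
      conv_lhs => rw [← hsplit]
      rw [tEdges_append, hendt1]
    rw [tEdges_append, hendt2, h1]
    exact add_comm _ _

/-! ### reversal -/

def rev : V → List (Bool × V) → List (Bool × V)
  | _, [] => []
  | a, (c, x) :: s => rev x s ++ [(c, a)]

@[simp] lemma rev_nil (a : V) : rev a ([] : List (Bool × V)) = [] := rfl

lemma length_rev (a : V) (s : List (Bool × V)) : (rev a s).length = s.length := by
  induction s generalizing a with
  | nil => rfl
  | cons p t ih => obtain ⟨c, x⟩ := p; simp [rev, ih]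

lemma map_fst_rev (a : V) (s : List (Bool × V)) :
    (rev a s).map Prod.fst = (s.map Prod.fst).reverse := by
  induction s generalizing a with
  | nil => rfl
  | cons p t ih =>
    obtain ⟨c, x⟩ := p
    simp [rev, ih]

lemma endV_rev (a : V) (s : List (Bool × V)) : endV (endV a s) (rev a s) = a := by
  induction s generalizing a with
  | nil => rfl
  | cons p t ih =>
    obtain ⟨c, x⟩ := p
    rw [endV_cons]
    show endV (endV x t) (rev x t ++ [(c, a)]) = a
    rw [endV_append, ih]
    rfl

lemma tEdges_rev (b : Bool) (a : V) (s : List (Bool × V)) :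
    tEdges b (endV a s) (rev a s) = tEdges b a s := by
  induction s generalizing a with
  | nil => rfl
  | cons p t ih =>
    obtain ⟨c, x⟩ := p
    rw [endV_cons]
    show tEdges b (endV x t) (rev x t ++ [(c, a)]) = _
    rw [tEdges_append, ih, endV_rev]
    rw [tEdges_cons]
    show tEdges b x t + ((if c = b then {s(x, a)} else 0) + 0) = _
    rw [add_zero, add_comm, Sym2.eq_swap]
    rfl

lemma headD_reverse {α : Type*} (l : List α) (d : α) :
    l.reverse.headD d = l.getLastD d := by
  rw [List.headD_eq_head?, List.head?_reverse, List.getLastD_eq_getLast?]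

lemma getLastD_reverse {α : Type*} (l : List α) (d : α) :
    l.reverse.getLastD d = l.headD d := by
  rw [List.getLastD_eq_getLast?, ← List.head?_reverse, List.reverse_reverse,
    List.headD_eq_head?]

lemma firstC_rev (a : V) (s : List (Bool × V)) : firstC (rev a s) = lastC s := by
  unfold firstC lastC
  rw [map_fst_rev, headD_reverse]

lemma lastC_rev (a : V) (s : List (Bool × V)) : lastC (rev a s) = firstC s := by
  unfold firstC lastC
  rw [map_fst_rev, getLastD_reverse]

lemma rev_cyc {a : V} {s : List (Bool × V)} (h : Cyc a s) :
    Cyc a (rev a s) ∧ (∀ b, tEdges b a (rev a s) = tEdges b a s) := by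
  obtain ⟨hne, hend, hch, hlf⟩ := h
  have hrne : rev a s ≠ [] := by
    apply List.ne_nil_of_length_pos
    rw [length_rev]
    exact List.length_pos_iff.mpr hne
  have hre : endV a (rev a s) = a := by
    have := endV_rev a s
    rwa [hend] at this
  have hchr : List.Chain' (· ≠ ·) ((rev a s).map Prod.fst) := by
    rw [map_fst_rev]
    unfold List.Chain'; rw [List.isChain_reverse]
    have : (flip (· ≠ ·) : Bool → Bool → Prop) = (· ≠ ·) := by
      funext x y
      simp [flip, ne_comm]
    exact List.IsChain.imp (fun _ _ h => Ne.symm h) hch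
  refine ⟨⟨hrne, hre, hchr, ?_⟩, fun b => ?_⟩
  · rw [firstC_rev, lastC_rev]
    exact fun h' => hlf h'.symm
  · have := tEdges_rev b a s
    rwa [hend] at this

/-! ### splicing -/

lemma splice_aux {u : V} {p t : List (Bool × V)} (hp : Cyc u p) (ht : Cyc u t)
    (hl : lastC t = lastC p) :
    Cyc u (p ++ t) ∧ ∀ b, tEdges b u (p ++ t) = tEdges b u p + tEdges b u t := by
  obtain ⟨hpne, hpe, hpch, hpl⟩ := hp
  obtain ⟨htne, hte, htch, htl⟩ := ht
  have hft : firstC t = !lastC t := by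
    cases hx : firstC t <;> cases hy : lastC t <;> simp_all
  refine ⟨⟨by simp [hpne], ?_, ?_, ?_⟩, fun b => ?_⟩
  · rw [endV_append, hpe, hte]
  · rw [List.map_append]; unfold List.Chain'; rw [List.isChain_append]
    refine ⟨hpch, htch, ?_⟩
    intro x hx y hy
    rw [getLast?_eq_getLastD (by simpa using hpne) false] at hx
    rw [head?_eq_headD (by simpa using htne) false] at hy
    simp only [Option.mem_def, Option.some.injEq] at hx hy
    subst hx; subst hy
    show lastC p ≠ firstC t
    rw [hft, hl]
    cases lastC p <;> simp
  · show lastC (p ++ t) ≠ firstC (p ++ t)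
    unfold lastC firstC
    rw [List.map_append, getLastD_append _ _ (by simpa using htne),
      headD_append _ _ (by simpa using hpne)]
    show lastC t ≠ firstC p
    rw [hl]
    exact hpl
  · rw [tEdges_append, hpe]

lemma splice {u : V} {p t : List (Bool × V)} (hp : Cyc u p) (ht : Cyc u t) :
    ∃ q, Cyc u q ∧ ∀ b, tEdges b u q = tEdges b u p + tEdges b u t := by
  by_cases hlt : lastC t = lastC p
  · obtain ⟨h1, h2⟩ := splice_aux hp ht hlt
    exact ⟨p ++ t, h1, h2⟩
  · obtain ⟨hrc, hre⟩ := rev_cyc ht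
    have hfl : firstC t = !lastC t := by
      have h' := ht.2.2.2
      cases hx : firstC t <;> cases hy : lastC t <;> simp_all
    have hl' : lastC (rev u t) = lastC p := by
      rw [lastC_rev, hfl]
      cases hx : lastC t <;> cases hy : lastC p <;> simp_all
    obtain ⟨h1, h2⟩ := splice_aux hp hrc hl'
    refine ⟨p ++ rev u t, h1, fun b => ?_⟩
    rw [h2 b, hre b]

/-! ### merging all cycles -/

lemma walk_closed {G : SimpleGraph V} {S : V → Prop}
    (hcl : ∀ ⦃x y⦄, G.Adj x y → S x → S y) :
    ∀ {x y : V}, G.Walk x y → S x → S y := by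
  intro x y w
  induction w with
  | nil => exact id
  | cons h p ih => exact fun hx => ih (hcl h hx)

lemma merge (B R : Multiset (Sym2 V)) (hconn : (underGraph (B + R)).Connected) :
    ∀ (k : ℕ) (B' R' : Multiset (Sym2 V)) (a : V) (s : List (Bool × V)),
    Cyc a s → tEdges true a s + B' = B → tEdges false a s + R' = R →
    (∀ w, degAt B' w = degAt R' w) → Multiset.card (B' + R') ≤ k →
    ∃ (a' : V) (s' : List (Bool × V)), Cyc a' s' ∧
      tEdges true a' s' = B ∧ tEdges false a' s' = R := by
  intro k
  induction k with
  | zero =>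
    intro B' R' a s hcyc hB hR hbal hk
    rw [Multiset.card_add] at hk
    have hB0 : B' = 0 := by rw [← Multiset.card_eq_zero]; omega
    have hR0 : R' = 0 := by rw [← Multiset.card_eq_zero]; omega
    exact ⟨a, s, hcyc, by rw [← hB, hB0, add_zero], by rw [← hR, hR0, add_zero]⟩
  | succ k ih =>
    intro B' R' a s hcyc hB hR hbal hk
    by_cases h0 : Multiset.card (B' + R') = 0
    · rw [Multiset.card_add] at h0
      have hB0 : B' = 0 := by rw [← Multiset.card_eq_zero]; omega
      have hR0 : R' = 0 := by rw [← Multiset.card_eq_zero]; omega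
      exact ⟨a, s, hcyc, by rw [← hB, hB0, add_zero], by rw [← hR, hR0, add_zero]⟩
    have hdecomp : B + R = tEdges true a s + tEdges false a s + (B' + R') := by
      rw [← hB, ← hR]
      ext f
      simp only [Multiset.count_add]
      omega
    have hS : ∃ u ∈ a :: s.map Prod.snd, 0 < degAt (B' + R') u := by
      by_contra hno
      push_neg at hno
      have hcl : ∀ ⦃x y⦄, (underGraph (B + R)).Adj x y →
          x ∈ a :: s.map Prod.snd → y ∈ a :: s.map Prod.snd := by
        intro x y hadj hx
        obtain ⟨hxy, hmem⟩ : x ≠ y ∧ s(x, y) ∈ B + R := hadj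
        rw [hdecomp] at hmem
        rcases Multiset.mem_add.mp hmem with h1 | h2
        · rcases Multiset.mem_add.mp h1 with h3 | h3
          · exact mem_vertices_of_tEdges h3 y (by simp)
          · exact mem_vertices_of_tEdges h3 y (by simp)
        · have := degAt_pos_of_mem h2 (by simp : x ∈ s(x, y))
          have h' := hno x hx
          omega
      have hBRne : B' + R' ≠ 0 := fun h => h0 (by rw [h]; rfl)
      obtain ⟨e, he⟩ := Multiset.exists_mem_of_ne_zero hBRne
      obtain ⟨z, hz⟩ : ∃ z, z ∈ e := ⟨e.out.1, Sym2.out_fst_mem e⟩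
      have hzS : z ∈ a :: s.map Prod.snd :=
        (hconn.preconnected a z).elim
          (fun w => walk_closed hcl w List.mem_cons_self)
      have h' := hno z hzS
      have := degAt_pos_of_mem he hz
      omega
    obtain ⟨u, huS, hupos⟩ := hS
    obtain ⟨t, htc, htB, htR⟩ := extract B' R' hbal u hupos
    obtain ⟨s₂, hs₂c, hs₂e⟩ := rotate_cyc hcyc huS
    obtain ⟨q, hqc, hqe⟩ := splice hs₂c htc
    set B'' := B' - tEdges true u t with hB''
    set R'' := R' - tEdges false u t with hR''
    have hBsum : tEdges true u t + B'' = B' := add_tsub_cancel_of_le htB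
    have hRsum : tEdges false u t + R'' = R' := add_tsub_cancel_of_le htR
    have hqB : tEdges true u q + B'' = B := by
      rw [hqe true, hs₂e true, add_assoc, hBsum, hB]
    have hqR : tEdges false u q + R'' = R := by
      rw [hqe false, hs₂e false, add_assoc, hRsum, hR]
    have hbal'' : ∀ w, degAt B'' w = degAt R'' w := by
      intro w
      have h1 := degAt_add (tEdges true u t) B'' w
      rw [hBsum] at h1
      have h2 := degAt_add (tEdges false u t) R'' w
      rw [hRsum] at h2
      have h3 := cyc_balanced htc w
      have h4 := hbal w
      omega
    have hcard : Multiset.card (B'' + R'') ≤ k := by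
      have c1 : Multiset.card (tEdges true u t) + Multiset.card B''
          = Multiset.card B' := by
        rw [← Multiset.card_add, hBsum]
      have c2 : Multiset.card (tEdges false u t) + Multiset.card R''
          = Multiset.card R' := by
        rw [← Multiset.card_add, hRsum]
      have c3 := card_tEdges u t
      have c4 : 1 ≤ t.length := List.length_pos_iff.mpr htc.1
      rw [Multiset.card_add] at hk ⊢
      omega
    exact ih B'' R'' u q hqc hqB hqR hbal'' hcard

/-! ### bridge to the `HasAltEulerianCycle` formulation -/

lemma tEdges_zip (b : Bool) : ∀ (cs : List Bool) (ws : List V) (a : V),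
    cs.length = ws.length →
    tEdges b a (cs.zip ws)
      = ↑(((((a :: ws).zip ws).zip cs).filter (fun p => p.2 = b)).map
          fun p => s(p.1.1, p.1.2)) := by
  intro cs
  induction cs with
  | nil =>
    intro ws a h
    obtain rfl : ws = [] := List.length_eq_zero_iff.mp h.symm
    simp
  | cons c cs ihc =>
    intro ws a h
    cases ws with
    | nil => simp at h
    | cons x ws' =>
      have hlen : cs.length = ws'.length := by simpa using h
      have hzip : ((a :: x :: ws').zip (x :: ws')) = (a, x) :: ((x :: ws').zip ws') := rfl
      rw [hzip, List.zip_cons_cons, List.zip_cons_cons, tEdges_cons, List.filter_cons]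
      by_cases hcb : c = b
      · subst hcb
        simp [ihc ws' x hlen, Multiset.singleton_add, ← Multiset.cons_coe]
      · simp [hcb, ihc ws' x hlen]

lemma getElem_congr_idx {α : Type*} (cs : List α) (i j : ℕ) (hi : i < cs.length)
    (hj : j < cs.length) (h : i = j) : cs[i] = cs[j] := by
  subst h; rfl

lemma cyclic_iff (cs : List Bool) :
    (∀ p ∈ cs.zip (cs.rotate 1), p.1 ≠ p.2) ↔
    (List.Chain' (· ≠ ·) cs ∧ (cs = [] ∨ cs.getLastD false ≠ cs.headD false)) := by
  constructor
  · intro h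
    have key : ∀ i (hi : i < cs.length), cs[i] ≠ cs[(i + 1) % cs.length]'
        (Nat.mod_lt _ (by omega)) := by
      intro i hi
      have hzl : i < (cs.zip (cs.rotate 1)).length := by
        rw [List.length_zip, List.length_rotate]
        omega
      have hp : (cs.zip (cs.rotate 1))[i] ∈ cs.zip (cs.rotate 1) :=
        List.getElem_mem _
      have := h _ hp
      rw [List.getElem_zip] at this
      simpa [List.getElem_rotate] using this
    refine ⟨?_, ?_⟩
    · unfold List.Chain'; rw [List.isChain_iff_getElem]
      intro i hi
      have hk := key i (by omega)
      have he : cs[(i + 1) % cs.length]'(Nat.mod_lt _ (by omega)) = cs[i + 1]'(by omega) :=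
        getElem_congr_idx _ _ _ _ (by omega) (Nat.mod_eq_of_lt (by omega))
      rw [he] at hk
      exact hk
    · rcases eq_or_ne cs [] with rfl | hne
      · exact Or.inl rfl
      · right
        have hlen : 0 < cs.length := List.length_pos_iff.mpr hne
        have hk := key (cs.length - 1) (by omega)
        have he : cs[(cs.length - 1 + 1) % cs.length]'(Nat.mod_lt _ (by omega))
            = cs[0]'(by omega) :=
          getElem_congr_idx _ _ _ _ (by omega)
            (by rw [Nat.sub_add_cancel hlen, Nat.mod_self])
        rw [he] at hk
        rw [getLastD_eq_getElem hne false (by omega), headD_eq_getElem hlen false]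
        exact hk
  · rintro ⟨hch, hcyc⟩ p hp
    obtain ⟨i, hi, hpe⟩ := List.mem_iff_getElem.mp hp
    have hil : i < cs.length := by
      rw [List.length_zip, List.length_rotate] at hi
      omega
    rw [List.getElem_zip] at hpe
    rw [← hpe]
    simp only [ne_eq]
    rw [List.getElem_rotate]
    intro hcontra
    by_cases hlast : i + 1 < cs.length
    · have he : cs[(i + 1) % cs.length]'(Nat.mod_lt _ (by omega)) = cs[i + 1]'hlast :=
        getElem_congr_idx _ _ _ _ (by omega) (Nat.mod_eq_of_lt hlast)
      have hth := List.isChain_iff_getElem.mp hch i (by omega)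
      exact hth (by rw [← he]; exact hcontra)
    · have hlen : 0 < cs.length := by omega
      have he : cs[(i + 1) % cs.length]'(Nat.mod_lt _ (by omega)) = cs[0]'(by omega) :=
        getElem_congr_idx _ _ _ _ (by omega)
          (by rw [show i = cs.length - 1 by omega, Nat.sub_add_cancel hlen, Nat.mod_self])
      rcases hcyc with rfl | hne2
      · simp at hil
      · apply hne2
        rw [getLastD_eq_getElem (List.ne_nil_of_length_pos hlen) false (by omega),
          headD_eq_getElem hlen false]
        have hieq : cs[cs.length - 1]'(by omega) = cs[i]'hil :=
          getElem_congr_idx _ _ _ _ (by omega) (by omega)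
        rw [hieq, hcontra, he]

end AltEuler

open AltEuler in
/-- Kotzig/Pevzner: a connected bicoloured (multi)graph has an alternating Eulerian
cycle iff at every vertex the numbers of incident edges of the two colours coincide
(loops counting twice). -/
theorem alternating_eulerian_iff_balanced {V : Type*} [Fintype V] [DecidableEq V]
    (B R : Multiset (Sym2 V))
    (hconn : (underGraph (B + R)).Connected)
    (hinc : ∀ v : V, ∃ e ∈ B + R, v ∈ e) :
    HasAltEulerianCycle B R ↔ ∀ v : V, degAt B v = degAt R v := by
  constructor
  · rintro ⟨vs, cs, hlen, halt, hB, hR⟩ w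
    cases vs with
    | nil =>
      have hB0 : B = 0 := by simpa using hB.symm
      have hR0 : R = 0 := by simpa using hR.symm
      rw [hB0, hR0]
    | cons v vt =>
      have hwsv : (v :: vt).rotate 1 = vt ++ [v] := by
        rw [List.rotate_cons_succ, List.rotate_zero]
      have hlw : cs.length = ((v :: vt).rotate 1).length := by
        rw [List.length_rotate]; exact hlen.symm
      have hzipeq : (v :: vt).zip ((v :: vt).rotate 1)
          = (v :: (v :: vt).rotate 1).zip ((v :: vt).rotate 1) := by
        rw [hwsv]
        calc (v :: vt).zip (vt ++ [v])
            = ((v :: vt) ++ [v]).zip (vt ++ [v]) :=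
              (zip_append_left _ _ _ (by simp)).symm
          _ = (v :: (vt ++ [v])).zip (vt ++ [v]) := by rw [List.cons_append]
      have hBe : tEdges true v (cs.zip ((v :: vt).rotate 1)) = B := by
        rw [tEdges_zip true cs _ v hlw]
        rw [hzipeq] at hB
        exact hB
      have hRe : tEdges false v (cs.zip ((v :: vt).rotate 1)) = R := by
        rw [tEdges_zip false cs _ v hlw]
        rw [hzipeq] at hR
        exact hR
      have hcsl : cs.length = vt.length + 1 := by simpa using hlen.symm
      have hsne : cs.zip ((v :: vt).rotate 1) ≠ [] := by
        apply List.ne_nil_of_length_pos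
        rw [List.length_zip, List.length_rotate]
        simp only [List.length_cons]
        omega
      have hmapfst : (cs.zip ((v :: vt).rotate 1)).map Prod.fst = cs :=
        List.map_fst_zip (le_of_eq hlw)
      have hmapsnd : (cs.zip ((v :: vt).rotate 1)).map Prod.snd = (v :: vt).rotate 1 :=
        List.map_snd_zip (le_of_eq hlw.symm)
      have hend : endV v (cs.zip ((v :: vt).rotate 1)) = v := by
        rw [endV_eq_getLastD, hmapsnd, hwsv, getLastD_append _ _ (by simp)]
        rfl
      have hcyccs := (cyclic_iff cs).mp halt
      have hcsne : cs ≠ [] := by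
        apply List.ne_nil_of_length_pos; omega
      have hcyc : Cyc v (cs.zip ((v :: vt).rotate 1)) := by
        refine ⟨hsne, hend, ?_, ?_⟩
        · rw [hmapfst]; exact hcyccs.1
        · show lastC _ ≠ firstC _
          unfold lastC firstC
          rw [hmapfst]
          rcases hcyccs.2 with h' | h'
          · exact absurd h' hcsne
          · exact h'
      have hfin := cyc_balanced hcyc w
      rw [hBe, hRe] at hfin
      exact hfin
  · intro hbal
    obtain ⟨v⟩ := hconn.nonempty
    obtain ⟨e, he, hv⟩ := hinc v
    have hpos : 0 < degAt (B + R) v := degAt_pos_of_mem he hv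
    obtain ⟨t, htc, htB, htR⟩ := extract B R hbal v hpos
    have hbal' : ∀ w, degAt (B - tEdges true v t) w = degAt (R - tEdges false v t) w := by
      intro w
      have h1 := degAt_add (tEdges true v t) (B - tEdges true v t) w
      rw [add_tsub_cancel_of_le htB] at h1
      have h2 := degAt_add (tEdges false v t) (R - tEdges false v t) w
      rw [add_tsub_cancel_of_le htR] at h2
      have h3 := cyc_balanced htc w
      have h4 := hbal w
      omega
    obtain ⟨a, s, hcyc, hBt, hRt⟩ := merge B R hconn
      (Multiset.card ((B - tEdges true v t) + (R - tEdges false v t)))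
      (B - tEdges true v t) (R - tEdges false v t) v t htc
      (add_tsub_cancel_of_le htB) (add_tsub_cancel_of_le htR) hbal' le_rfl
    obtain ⟨hsne, hend, hch, hlf⟩ := hcyc
    have hmne : s.map Prod.snd ≠ [] := by simpa using hsne
    have hlast : (s.map Prod.snd).getLast hmne = a := by
      have h1 : (s.map Prod.snd).getLastD a = a := by rw [← endV_eq_getLastD, hend]
      rw [List.getLastD_eq_getLast?, List.getLast?_eq_getLast hmne, Option.getD_some] at h1
      exact h1
    have hdl : (a :: (s.map Prod.snd).dropLast) ++ [(s.map Prod.snd).getLast hmne]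
        = a :: s.map Prod.snd := by
      rw [List.cons_append, List.dropLast_append_getLast]
    have hrot : (a :: (s.map Prod.snd).dropLast).rotate 1 = s.map Prod.snd := by
      rw [List.rotate_cons_succ, List.rotate_zero]
      conv_rhs => rw [← List.dropLast_append_getLast hmne]
      rw [hlast]
    have hzipeq2 : (a :: (s.map Prod.snd).dropLast).zip (s.map Prod.snd)
        = (a :: s.map Prod.snd).zip (s.map Prod.snd) := by
      conv_rhs => rw [← hdl]
      rw [zip_append_left]
      simp only [List.length_cons, List.length_dropLast, List.length_map]
      have := List.length_pos_iff.mpr hsne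
      omega
    have hbrT := tEdges_zip true (s.map Prod.fst) (s.map Prod.snd) a (by simp)
    rw [zip_map_fst_snd'] at hbrT
    have hbrF := tEdges_zip false (s.map Prod.fst) (s.map Prod.snd) a (by simp)
    rw [zip_map_fst_snd'] at hbrF
    refine ⟨a :: (s.map Prod.snd).dropLast, s.map Prod.fst, ?_, ?_, ?_, ?_⟩
    · simp only [List.length_cons, List.length_dropLast, List.length_map]
      have := List.length_pos_iff.mpr hsne
      omega
    · exact (cyclic_iff (s.map Prod.fst)).mpr ⟨hch, Or.inr hlf⟩
    · rw [hrot, hzipeq2, ← hbrT]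
      exact hBt
    · rw [hrot, hzipeq2, ← hbrF]
      exact hRt
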